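/- arXiv:math/0509513 — 2 statements merged into one kernel-verified Lean document; each statement's English description precedes it below -/
import Mathlib

section
/- Let R : [0,∞) → ℝ be a function and d ≥ 0 a constant such that |R(T) - 4d e^{T/2}| ≤ g(T) e^{T/2} for some positive function g decreasing to 0. Then ∫_1^T (e^{s/2}/s) R(s) ds = (e^{T/2}/T) R(T) + o(e^T/T) as T → ∞. -/
open Filter Real MeasureTheory

private lemma intExp1 {a b : ℝ} (ha : 0 < a) (hab : a ≤ b) :
    IntervalIntegrable (fun s => Real.exp s / s) volume a b := by
  apply ContinuousOn.intervalIntegrable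
  apply Real.continuous_exp.continuousOn.div continuousOn_id
  intro x hx
  rw [Set.uIcc_of_le hab] at hx
  exact (lt_of_lt_of_le ha hx.1).ne'

private lemma intExp2 {a b : ℝ} (ha : 0 < a) (hab : a ≤ b) :
    IntervalIntegrable (fun s => Real.exp s / s ^ 2) volume a b := by
  apply ContinuousOn.intervalIntegrable
  apply Real.continuous_exp.continuousOn.div (continuousOn_pow 2)
  intro x hx
  rw [Set.uIcc_of_le hab] at hx
  exact (pow_pos (lt_of_lt_of_le ha hx.1) 2).ne'

private lemma J_eq {T : ℝ} (hT : 1 ≤ T) :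
    ∫ s in (1:ℝ)..T, Real.exp s / s
      = (Real.exp T / T - Real.exp 1) + ∫ s in (1:ℝ)..T, Real.exp s / s ^ 2 := by
  have h1 : ∫ s in (1:ℝ)..T, (Real.exp s / s - Real.exp s / s ^ 2)
      = Real.exp T / T - Real.exp 1 / 1 := by
    apply intervalIntegral.integral_eq_sub_of_hasDerivAt
    · intro x hx
      rw [Set.uIcc_of_le hT] at hx
      have hx0 : x ≠ 0 := by linarith [hx.1]
      have h := (Real.hasDerivAt_exp x).fun_div (hasDerivAt_id' x) hx0
      refine h.congr_deriv ?_
      field_simp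
    · exact (intExp1 one_pos hT).sub (intExp2 one_pos hT)
  rw [intervalIntegral.integral_sub (intExp1 one_pos hT) (intExp2 one_pos hT)] at h1
  linarith [h1]

private lemma split_bound {f : ℝ → ℝ} {T c1 c2 : ℝ} (hT : 2 ≤ T)
    (hf : IntervalIntegrable f volume 1 T) (hc1 : 0 ≤ c1) (hc2 : 0 ≤ c2)
    (h1 : ∀ s ∈ Set.Icc (1:ℝ) (T/2), |f s| ≤ c1 * Real.exp s)
    (h2 : ∀ s ∈ Set.Icc (T/2) T, |f s| ≤ c2 * Real.exp s) :
    |∫ s in (1:ℝ)..T, f s| ≤ c1 * Real.exp (T/2) + c2 * Real.exp T := by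
  have h12 : (1:ℝ) ≤ T/2 := by linarith
  have h2T : T/2 ≤ T := by linarith
  have h1T : (1:ℝ) ≤ T := by linarith
  have hfa : IntervalIntegrable f volume 1 (T/2) := hf.mono_set (by
    rw [Set.uIcc_of_le h12, Set.uIcc_of_le h1T]
    exact Set.Icc_subset_Icc le_rfl h2T)
  have hfb : IntervalIntegrable f volume (T/2) T := hf.mono_set (by
    rw [Set.uIcc_of_le h2T, Set.uIcc_of_le h1T]
    exact Set.Icc_subset_Icc h12 le_rfl)
  have key : ∀ (a b c : ℝ), a ≤ b → 0 ≤ c → IntervalIntegrable f volume a b →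
      (∀ s ∈ Set.Icc a b, |f s| ≤ c * Real.exp s) →
      |∫ s in a..b, f s| ≤ c * Real.exp b := by
    intro a b c hab hc hfab hb
    calc |∫ s in a..b, f s| ≤ ∫ s in a..b, |f s| :=
          intervalIntegral.abs_integral_le_integral_abs hab
      _ ≤ ∫ s in a..b, c * Real.exp s := by
          apply intervalIntegral.integral_mono_on hab hfab.abs
          · exact (Real.continuous_exp.const_smul c).intervalIntegrable a b
          · exact hb
      _ = c * (Real.exp b - Real.exp a) := by
          rw [intervalIntegral.integral_const_mul, integral_exp]
      _ ≤ c * Real.exp b := by nlinarith [Real.exp_pos a]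
  rw [← intervalIntegral.integral_add_adjacent_intervals hfa hfb]
  calc |_ + _| ≤ _ := abs_add_le _ _
    _ ≤ c1 * Real.exp (T/2) + c2 * Real.exp T := by
        gcongr
        · exact key 1 (T/2) c1 h12 hc1 hfa h1
        · exact key (T/2) T c2 h2T hc2 hfb h2

theorem stmt_7 (R g : ℝ → ℝ) (d : ℝ) (hd : 0 ≤ d)
    (hgpos : ∀ T, 0 ≤ T → 0 < g T) (hganti : AntitoneOn g (Set.Ici 0))
    (hg0 : Tendsto g atTop (nhds 0))
    (hint : ∀ T : ℝ, IntervalIntegrable (fun s => Real.exp (s / 2) / s * R s) volume 1 T)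
    (hR : ∀ T, 0 ≤ T → |R T - 4 * d * Real.exp (T / 2)| ≤ g T * Real.exp (T / 2)) :
    Tendsto (fun T : ℝ =>
      ((∫ s in (1:ℝ)..T, Real.exp (s / 2) / s * R s) - Real.exp (T / 2) / T * R T) /
        (Real.exp T / T)) atTop (nhds 0) := by
  rw [tendsto_zero_iff_norm_tendsto_zero]
  simp only [Real.norm_eq_abs]
  set h : ℝ → ℝ := fun T =>
    4 * d * (Real.exp 1 * (T * Real.exp (-T)) + T * Real.exp (-(T/2)) + 4 / T)
      + (g 1 * (T * Real.exp (-(T/2))) + 2 * g (T/2)) + g T with hh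
  apply squeeze_zero' (Eventually.of_forall fun t => abs_nonneg _) ?bound ?tend
  case bound =>
    filter_upwards [eventually_ge_atTop (2:ℝ)] with T hT2
    have h1T : (1:ℝ) ≤ T := by linarith
    have hT0 : (0:ℝ) < T := by linarith
    have hTne : T ≠ 0 := hT0.ne'
    have h12 : (1:ℝ) ≤ T/2 := by linarith
    have e3 : Real.exp (T/2) * Real.exp (T/2) = Real.exp T := by
      rw [← Real.exp_add]; congr 1; ring
    -- decomposition
    have hintB : IntervalIntegrable
        (fun s => Real.exp (s/2) / s * R s - 4 * d * (Real.exp s / s)) volume 1 T :=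
      (hint T).sub ((intExp1 one_pos h1T).const_mul (4*d))
    have hIdecomp : (∫ s in (1:ℝ)..T, Real.exp (s/2) / s * R s)
        = 4 * d * (∫ s in (1:ℝ)..T, Real.exp s / s)
          + ∫ s in (1:ℝ)..T, (Real.exp (s/2) / s * R s - 4 * d * (Real.exp s / s)) := by
      rw [intervalIntegral.integral_sub (hint T) ((intExp1 one_pos h1T).const_mul (4*d)),
        intervalIntegral.integral_const_mul]
      ring
    -- bound on A
    have hA : |4 * d * ((∫ s in (1:ℝ)..T, Real.exp s / s) - Real.exp T / T)|
        ≤ 4 * d * (Real.exp 1 + (Real.exp (T/2) + 4 / T^2 * Real.exp T)) := by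
      rw [J_eq h1T]
      have hI2 : |∫ s in (1:ℝ)..T, Real.exp s / s ^ 2|
          ≤ 1 * Real.exp (T/2) + 4 / T^2 * Real.exp T := by
        apply split_bound hT2 (intExp2 one_pos h1T) zero_le_one (by positivity)
        · intro s hs
          rw [abs_of_nonneg (by positivity)]
          rw [div_le_iff₀ (by nlinarith [hs.1] : (0:ℝ) < s^2)]
          have hs2 : 1 ≤ s^2 := by nlinarith [hs.1]
          nlinarith [Real.exp_pos s]
        · intro s hs
          rw [abs_of_nonneg (by positivity)]
          rw [div_le_iff₀ (by nlinarith [hs.1, h12] : (0:ℝ) < s^2)]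
          have hs1 : T/2 ≤ s := hs.1
          have hT4 : T^2 ≤ 4 * s^2 := by nlinarith
          rw [div_mul_eq_mul_div, div_mul_eq_mul_div, le_div_iff₀ (by positivity)]
          nlinarith [Real.exp_pos s]
      rw [abs_mul, abs_of_nonneg (by positivity : (0:ℝ) ≤ 4*d)]
      have habs : |Real.exp T / T - Real.exp 1
            + (∫ s in (1:ℝ)..T, Real.exp s / s ^ 2) - Real.exp T / T|
          ≤ Real.exp 1 + (1 * Real.exp (T/2) + 4 / T^2 * Real.exp T) := by
        have heq : Real.exp T / T - Real.exp 1
              + (∫ s in (1:ℝ)..T, Real.exp s / s ^ 2) - Real.exp T / T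
            = (∫ s in (1:ℝ)..T, Real.exp s / s ^ 2) - Real.exp 1 := by ring
        rw [heq]
        calc |(∫ s in (1:ℝ)..T, Real.exp s / s ^ 2) - Real.exp 1|
            ≤ |∫ s in (1:ℝ)..T, Real.exp s / s ^ 2| + |Real.exp 1| := abs_sub _ _
          _ ≤ Real.exp 1 + (1 * Real.exp (T/2) + 4 / T^2 * Real.exp T) := by
              rw [abs_of_nonneg (Real.exp_pos 1).le]; linarith [hI2]
      calc 4*d * |Real.exp T / T - Real.exp 1
            + (∫ s in (1:ℝ)..T, Real.exp s / s ^ 2) - Real.exp T / T|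
          ≤ 4*d * (Real.exp 1 + (1 * Real.exp (T/2) + 4 / T^2 * Real.exp T)) :=
            mul_le_mul_of_nonneg_left habs (by positivity)
        _ = 4*d * (Real.exp 1 + (Real.exp (T/2) + 4 / T^2 * Real.exp T)) := by ring
    -- bound on B
    have hpt : ∀ s : ℝ, 0 < s →
        |Real.exp (s/2) / s * R s - 4 * d * (Real.exp s / s)| ≤ g s * (Real.exp s / s) := by
      intro s hs1
      have hsne : s ≠ 0 := hs1.ne'
      have hes : Real.exp (s/2) * Real.exp (s/2) = Real.exp s := by
        rw [← Real.exp_add]; congr 1; ring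
      have heq : Real.exp (s/2) / s * R s - 4 * d * (Real.exp s / s)
          = Real.exp (s/2) / s * (R s - 4 * d * Real.exp (s/2)) := by
        field_simp
        linear_combination (4*d) * hes
      rw [heq, abs_mul, abs_of_nonneg (by positivity : (0:ℝ) ≤ Real.exp (s/2) / s)]
      calc Real.exp (s/2) / s * |R s - 4 * d * Real.exp (s/2)|
          ≤ Real.exp (s/2) / s * (g s * Real.exp (s/2)) :=
            mul_le_mul_of_nonneg_left (hR s hs1.le) (by positivity)
        _ = g s * (Real.exp s / s) := by rw [← hes]; field_simp
    have hB : |∫ s in (1:ℝ)..T, (Real.exp (s/2) / s * R s - 4 * d * (Real.exp s / s))|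
        ≤ g 1 * Real.exp (T/2) + (2 * g (T/2) / T) * Real.exp T := by
      have hg2 : 0 < g (T/2) := hgpos _ (by linarith)
      apply split_bound hT2 hintB (hgpos 1 zero_le_one).le (by positivity)
      · intro s hs
        have hs1 : (0:ℝ) < s := by linarith [hs.1]
        have hgs : g s ≤ g 1 := hganti (Set.mem_Ici.mpr zero_le_one)
          (Set.mem_Ici.mpr hs1.le) hs.1
        refine (hpt s hs1).trans ?_
        have hds : Real.exp s / s ≤ Real.exp s := by
          rw [div_le_iff₀ hs1]; nlinarith [Real.exp_pos s, hs.1]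
        have hgsnn := (hgpos s hs1.le).le
        nlinarith [Real.exp_pos s, div_nonneg (Real.exp_pos s).le hs1.le]
      · intro s hs
        have hs1 : (0:ℝ) < s := by linarith [hs.1]
        have hgs : g s ≤ g (T/2) := hganti (Set.mem_Ici.mpr (by linarith))
          (Set.mem_Ici.mpr hs1.le) hs.1
        refine (hpt s hs1).trans ?_
        have hds : Real.exp s / s ≤ 2 / T * Real.exp s := by
          rw [div_le_iff₀ hs1]
          have hTs : T ≤ 2 * s := by linarith [hs.1]
          rw [div_mul_eq_mul_div, div_mul_eq_mul_div, le_div_iff₀ hT0]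
          nlinarith [Real.exp_pos s]
        have hgsnn := (hgpos s hs1.le).le
        calc g s * (Real.exp s / s) ≤ g s * (2 / T * Real.exp s) :=
              mul_le_mul_of_nonneg_left hds hgsnn
          _ ≤ g (T/2) * (2 / T * Real.exp s) :=
              mul_le_mul_of_nonneg_right hgs (by positivity)
          _ = (2 * g (T/2) / T) * Real.exp s := by ring
    -- bound on C
    have hC : |4 * d * (Real.exp T / T) - Real.exp (T/2) / T * R T|
        ≤ g T * Real.exp T / T := by
      have heqC : 4 * d * (Real.exp T / T) - Real.exp (T/2) / T * R T
          = (Real.exp (T/2) / T) * -(R T - 4 * d * Real.exp (T/2)) := by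
        rw [← e3]
        field_simp
        ring
      rw [heqC, abs_mul, abs_neg, abs_of_nonneg (by positivity : (0:ℝ) ≤ Real.exp (T/2)/T)]
      calc Real.exp (T/2) / T * |R T - 4 * d * Real.exp (T/2)|
          ≤ Real.exp (T/2) / T * (g T * Real.exp (T/2)) :=
            mul_le_mul_of_nonneg_left (hR T (by linarith)) (by positivity)
        _ = g T * Real.exp T / T := by rw [← e3]; field_simp
    -- assemble
    rw [abs_div, abs_of_pos (by positivity : (0:ℝ) < Real.exp T / T),
      div_le_iff₀ (by positivity : (0:ℝ) < Real.exp T / T)]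
    have hNdecomp : (∫ s in (1:ℝ)..T, Real.exp (s/2) / s * R s) - Real.exp (T/2) / T * R T
        = 4 * d * ((∫ s in (1:ℝ)..T, Real.exp s / s) - Real.exp T / T)
          + (∫ s in (1:ℝ)..T, (Real.exp (s/2) / s * R s - 4 * d * (Real.exp s / s)))
          + (4 * d * (Real.exp T / T) - Real.exp (T/2) / T * R T) := by
      rw [hIdecomp]; ring
    calc |(∫ s in (1:ℝ)..T, Real.exp (s/2) / s * R s) - Real.exp (T/2) / T * R T|
        ≤ 4 * d * (Real.exp 1 + (Real.exp (T/2) + 4 / T^2 * Real.exp T))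
          + (g 1 * Real.exp (T/2) + (2 * g (T/2) / T) * Real.exp T)
          + g T * Real.exp T / T := by
          rw [hNdecomp]
          exact ((abs_add_le _ _).trans (add_le_add (abs_add_le _ _) le_rfl)).trans
            (add_le_add (add_le_add hA hB) hC)
      _ ≤ h T * (Real.exp T / T) := by
          apply le_of_eq
          simp only [hh]
          have hxne : Real.exp (T/2) ≠ 0 := (Real.exp_pos _).ne'
          have hx : Real.exp T = Real.exp (T/2) ^ 2 := by rw [sq, e3]
          have hninv : Real.exp (-(T/2)) = (Real.exp (T/2))⁻¹ := Real.exp_neg _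
          have hninv2 : Real.exp (-T) = (Real.exp (T/2) ^ 2)⁻¹ := by
            rw [Real.exp_neg, hx]
          rw [hx, hninv, hninv2]
          field_simp
          ring
  case tend =>
    have t1 : Tendsto (fun T : ℝ => T * Real.exp (-T)) atTop (nhds 0) := by
      simpa using Real.tendsto_pow_mul_exp_neg_atTop_nhds_zero 1
    have t2 : Tendsto (fun T : ℝ => T * Real.exp (-(T/2))) atTop (nhds 0) := by
      have h2 := (t1.comp (Tendsto.atTop_div_const two_pos tendsto_id)).const_mul (2:ℝ)
      rw [mul_zero] at h2
      apply h2.congr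
      intro x
      simp only [Function.comp_apply, id_eq]
      ring
    have t3 : Tendsto (fun T : ℝ => 4 / T) atTop (nhds 0) :=
      tendsto_const_nhds.div_atTop tendsto_id
    have t4 : Tendsto (fun T : ℝ => g (T/2)) atTop (nhds 0) :=
      hg0.comp (Tendsto.atTop_div_const two_pos tendsto_id)
    have tf := ((((t1.const_mul (Real.exp 1)).add t2).add t3).const_mul (4*d)).add
      ((t2.const_mul (g 1)).add (t4.const_mul 2)) |>.add hg0
    simp only [hh]
    simpa using tf
end

section
/- In the free group on k ≥ 2 generators, the number of cyclically reduced words of word length exactly m ≥ 1 equals q^m + 1 + (k-1)(1 + (-1)^m), where q = 2k - 1. -/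
/-- A reduced word is cyclically reduced if its first letter is not the inverse of its
last letter (the empty word is cyclically reduced). -/
def IsCyclicallyReduced {k : ℕ} (γ : FreeGroup (Fin k)) : Prop :=
  ∀ x : Fin k × Bool, γ.toWord.head? = some x → γ.toWord.getLast? ≠ some (x.1, !x.2)

namespace CycRedAux

abbrev W (k : ℕ) := Fin k × Bool

def ι {k : ℕ} (x : W k) : W k := (x.1, !x.2)

@[simp] lemma ι_ι {k : ℕ} (x : W k) : ι (ι x) = x := by simp [ι]

lemma ne_ι_comm {k : ℕ} {a b : W k} : a ≠ ι b ↔ b ≠ ι a := by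
  constructor <;> · rintro h rfl; simp at h

lemma ne_ι_self {k : ℕ} (x : W k) : x ≠ ι x := by
  intro h
  have := congrArg Prod.snd h
  simp [ι] at this

def Red {k : ℕ} (L : List (W k)) : Prop := L.Chain' (fun a b => b ≠ ι a)

def Cyc {k : ℕ} (L : List (W k)) : Prop :=
  ∀ x, L.head? = some x → L.getLast? ≠ some (ι x)

lemma reduce_eq_self_iff {k : ℕ} (L : List (W k)) :
    FreeGroup.reduce L = L ↔ Red L := by
  constructor
  · intro h
    induction L with
    | nil => exact List.isChain_nil
    | cons x t ih =>
      rw [FreeGroup.reduce.cons] at h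
      rcases ht : FreeGroup.reduce t with _ | ⟨y, ys⟩
      · rw [ht] at h
        simp only at h
        have : t = [] := by
          have := h.symm
          simpa using this
        subst this
        exact List.isChain_singleton _
      · rw [ht] at h
        simp only at h
        by_cases hc : x.1 = y.1 ∧ x.2 = !y.2
        · rw [if_pos hc] at h
          have h1 : ys.length + 2 ≤ t.length + 1 := by
            have : (FreeGroup.reduce t).length ≤ t.length :=
              (FreeGroup.reduce.red (L := t)).length_le
            rw [ht] at this
            simpa using Nat.add_le_add_right this 1
          have h2 : (x :: t).length = ys.length := by rw [← h]
          simp at h2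
          omega
        · rw [if_neg hc] at h
          have ht2 : t = y :: ys := by
            have := h.symm
            simpa using this
          have hred : FreeGroup.reduce t = t := by rw [ht, ht2]
          have cht := ih hred
          rw [ht2]
          refine List.isChain_cons_cons.mpr ⟨?_, ht2 ▸ cht⟩
          intro hy
          apply hc
          subst hy
          simp [ι]
  · intro h
    induction L with
    | nil => rfl
    | cons x t ih =>
      have hct : Red t := (List.isChain_cons.mp h).2
      have hrt : FreeGroup.reduce t = t := ih hct
      rw [FreeGroup.reduce.cons, hrt]
      cases t with
      | nil => rfl
      | cons y ys =>
        simp only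
        rw [if_neg]
        intro hc
        have hy : y ≠ ι x := by
          have := (List.isChain_cons.mp h).1
          simpa using this
        apply hy
        have : x = ι y := by
          cases x; cases y
          simp [ι] at hc ⊢
          exact ⟨hc.1, hc.2⟩
        rw [this, ι_ι]


def A (k m : ℕ) := {L : List (W k) // Red L ∧ L.length = m}
def C (k m : ℕ) := {L : List (W k) // (Red L ∧ L.length = m) ∧ Cyc L}
def D (k m : ℕ) := {L : List (W k) //
  (Red L ∧ L.length = m) ∧ ∃ x, L.head? = some x ∧ L.getLast? = some (ι x)}
def E (k m : ℕ) := {L : List (W k) //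
  (Red L ∧ L.length = m) ∧ ∃ x, L.head? = some x ∧ L.getLast? = some x}
def F (k m : ℕ) := {L : List (W k) //
  (Red L ∧ L.length = m) ∧ ∃ x y, L.head? = some x ∧ L.getLast? = some y ∧ y ≠ x}

lemma finite_aux {k m : ℕ} (P : List (W k) → Prop)
    (hP : ∀ L, P L → L.length = m) : Finite {L : List (W k) // P L} := by
  have : {L : List (W k) | P L} ⊆ {L | L.length = m} := fun L hL => hP L hL
  exact ((List.finite_length_eq (W k) m).subset this).to_subtype

instance {k m : ℕ} : Finite (A k m) := finite_aux _ (fun L h => h.2)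
instance {k m : ℕ} : Finite (C k m) := finite_aux _ (fun L h => h.1.2)
instance {k m : ℕ} : Finite (D k m) := finite_aux _ (fun L h => h.1.2)
instance {k m : ℕ} : Finite (E k m) := finite_aux _ (fun L h => h.1.2)
instance {k m : ℕ} : Finite (F k m) := finite_aux _ (fun L h => h.1.2)

lemma card_W (k : ℕ) : Nat.card (W k) = 2 * k := by
  simp [Nat.card_eq_fintype_card, mul_comm]

lemma card_A_one (k : ℕ) : Nat.card (A k 1) = 2 * k := by
  rw [← card_W k]
  refine (Nat.card_congr (Equiv.ofBijective
    (fun x : W k => (⟨[x], List.isChain_singleton _, rfl⟩ : A k 1)) ⟨?_, ?_⟩)).symm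
  · intro a b h
    simpa [Subtype.ext_iff] using h
  · rintro ⟨L, hL, hlen⟩
    match L, hlen with
    | [x], _ => exact ⟨x, rfl⟩

noncomputable def fiberEquiv {k : ℕ} (a : W k) : {x : W k // x ≠ a} ≃ Fin (2 * k - 1) := by
  apply Fintype.equivFinOfCardEq
  have : Fintype.card {x : W k // x ≠ a} = Fintype.card (W k) - 1 := by
    classical
    rw [Fintype.card_subtype_compl (· = a), Fintype.card_subtype_eq]
  rw [this]
  simp [mul_comm]

lemma A_ne_nil {k m : ℕ} (hm : 1 ≤ m) (v : A k m) : v.val ≠ [] := by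
  intro h
  have := v.property.2
  rw [h] at this
  simp at this
  omega

def consMap {k m : ℕ} (hm : 1 ≤ m)
    (p : Σ v : A k m, {x : W k // x ≠ ι (v.val.head (A_ne_nil hm v))}) : A k (m + 1) :=
  ⟨p.2.val :: p.1.val, by
    refine ⟨List.isChain_cons.mpr ⟨?_, p.1.property.1⟩, by simp [p.1.property.2]⟩
    intro y hy
    rw [List.head?_eq_head (A_ne_nil hm p.1)] at hy
    have hy' : p.1.val.head (A_ne_nil hm p.1) = y := Option.some.inj hy
    rw [← hy']
    exact ne_ι_comm.mp p.2.property⟩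

lemma card_A_succ (k m : ℕ) (hm : 1 ≤ m) :
    Nat.card (A k (m + 1)) = (2 * k - 1) * Nat.card (A k m) := by
  have hbij : Function.Bijective (consMap (k := k) hm) := by
    constructor
    · rintro ⟨⟨v, hv⟩, ⟨x, hx⟩⟩ ⟨⟨v', hv'⟩, ⟨x', hx'⟩⟩ h
      have h2 : x :: v = x' :: v' := congrArg Subtype.val h
      simp only [List.cons.injEq] at h2
      obtain ⟨rfl, rfl⟩ := h2
      rfl
    · rintro ⟨L, hL, hlen⟩
      match L, hlen with
      | a :: t, hlen =>
        have hred : Red t := (List.isChain_cons.mp hL).2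
        have hlt : t.length = m := by simpa using hlen
        refine ⟨⟨⟨t, hred, hlt⟩, a, ?_⟩, rfl⟩
        have hne : t ≠ [] := A_ne_nil hm ⟨t, hred, hlt⟩
        have := (List.isChain_cons.mp hL).1 (t.head hne) (List.head?_eq_head hne)
        exact ne_ι_comm.mp this
  have h1 : Nat.card (A k (m + 1)) =
      Nat.card (Σ v : A k m, {x : W k // x ≠ ι (v.val.head (A_ne_nil hm v))}) :=
    (Nat.card_congr (Equiv.ofBijective _ hbij)).symm
  rw [h1, Nat.card_congr (Equiv.sigmaCongrRight (fun v => fiberEquiv _)),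
    Nat.card_congr (Equiv.sigmaEquivProd _ _), Nat.card_prod]
  simp [mul_comm]

def forgetCD {k m : ℕ} : C k m ⊕ D k m → A k m
  | .inl c => ⟨c.val, c.property.1⟩
  | .inr d => ⟨d.val, d.property.1⟩

def forgetEF {k m : ℕ} : E k m ⊕ F k m → A k m
  | .inl c => ⟨c.val, c.property.1⟩
  | .inr d => ⟨d.val, d.property.1⟩

lemma card_split_CD (k m : ℕ) :
    Nat.card (A k m) = Nat.card (C k m) + Nat.card (D k m) := by
  classical
  have hbij : Function.Bijective (forgetCD (k := k) (m := m)) := by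
    constructor
    · rintro (⟨c, hc⟩ | ⟨c, hc⟩) (⟨d, hd⟩ | ⟨d, hd⟩) h <;>
        simp only [forgetCD] at h <;>
        (have h2 : c = d := congrArg Subtype.val h) <;> subst h2
      · rfl
      · exact absurd hd.2 (by rintro ⟨x, hx, hlast⟩; exact hc.2 x hx hlast)
      · exact absurd hc.2 (by rintro ⟨x, hx, hlast⟩; exact hd.2 x hx hlast)
      · rfl
    · rintro ⟨L, hL⟩
      by_cases hP : ∃ x, L.head? = some x ∧ L.getLast? = some (ι x)
      · exact ⟨Sum.inr ⟨L, hL, hP⟩, rfl⟩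
      · exact ⟨Sum.inl ⟨L, hL, fun x hx hlast => hP ⟨x, hx, hlast⟩⟩, rfl⟩
  rw [← Nat.card_congr (Equiv.ofBijective _ hbij), Nat.card_sum]

lemma card_split_EF (k m : ℕ) (hm : 1 ≤ m) :
    Nat.card (A k m) = Nat.card (E k m) + Nat.card (F k m) := by
  classical
  have hbij : Function.Bijective (forgetEF (k := k) (m := m)) := by
    constructor
    · rintro (⟨c, hc⟩ | ⟨c, hc⟩) (⟨d, hd⟩ | ⟨d, hd⟩) h <;>
        simp only [forgetEF] at h <;>
        (have h2 : c = d := congrArg Subtype.val h) <;> subst h2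
      · rfl
      · obtain ⟨x, hx, hlast⟩ := hc.2
        obtain ⟨x', y', hx', hy', hne⟩ := hd.2
        rw [hx] at hx'; rw [hlast] at hy'
        exact absurd (by rw [← Option.some.inj hx', ← Option.some.inj hy']) hne
      · obtain ⟨x, hx, hlast⟩ := hd.2
        obtain ⟨x', y', hx', hy', hne⟩ := hc.2
        rw [hx] at hx'; rw [hlast] at hy'
        exact absurd (by rw [← Option.some.inj hx', ← Option.some.inj hy']) hne
      · rfl
    · rintro ⟨L, hL⟩
      have hne : L ≠ [] := A_ne_nil hm ⟨L, hL⟩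
      by_cases hP : L.getLast hne = L.head hne
      · exact ⟨Sum.inl ⟨L, hL, L.head hne, List.head?_eq_head hne,
          by rw [List.getLast?_eq_getLast hne, hP]⟩, rfl⟩
      · exact ⟨Sum.inr ⟨L, hL, L.head hne, L.getLast hne, List.head?_eq_head hne,
          List.getLast?_eq_getLast hne, hP⟩, rfl⟩
  rw [← Nat.card_congr (Equiv.ofBijective _ hbij), Nat.card_sum]

lemma C_ne_nil {k m : ℕ} (hm : 1 ≤ m) (v : C k m) : v.val ≠ [] :=
  A_ne_nil hm ⟨v.val, v.property.1⟩

lemma F_ne_nil {k m : ℕ} (hm : 1 ≤ m) (v : F k m) : v.val ≠ [] :=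
  A_ne_nil hm ⟨v.val, v.property.1⟩

def appendHead {k m : ℕ} (hm : 1 ≤ m) (v : C k m) : E k (m + 1) := by
  refine ⟨v.val ++ [v.val.head (C_ne_nil hm v)], ⟨?_, by simp [v.property.1.2]⟩,
    v.val.head (C_ne_nil hm v), ?_, List.getLast?_concat⟩
  · refine List.isChain_append.mpr ⟨v.property.1.1, List.isChain_singleton _, ?_⟩
    intro a ha b hb
    simp only [List.head?_cons, Option.mem_def, Option.some.injEq] at hb
    subst hb
    have hlast : v.val.getLast? = some a := ha
    have hcyc := v.property.2 (v.val.head (C_ne_nil hm v)) (List.head?_eq_head _)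
    rw [hlast] at hcyc
    intro hcontra
    exact hcyc (by rw [hcontra, ι_ι])
  · rw [List.head?_append_of_ne_nil _ (C_ne_nil hm v), List.head?_eq_head]

lemma card_E_succ (k m : ℕ) (hm : 1 ≤ m) :
    Nat.card (E k (m + 1)) = Nat.card (C k m) := by
  refine (Nat.card_congr (Equiv.ofBijective (appendHead (k := k) hm) ⟨?_, ?_⟩)).symm
  · intro v v' h
    have h2 := congrArg Subtype.val h
    simp only [appendHead] at h2
    have := List.append_inj_left' h2 rfl
    exact Subtype.ext this
  · rintro ⟨L, hL, x, hx, hlast⟩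
    have hne : L ≠ [] := by rintro rfl; simp at hx
    have hvw : L.dropLast ++ [L.getLast hne] = L := List.dropLast_append_getLast hne
    have hx' : L.head hne = x := Option.some.inj ((List.head?_eq_head hne).symm.trans hx)
    have hlast' : L.getLast hne = x :=
      Option.some.inj ((List.getLast?_eq_getLast hne).symm.trans hlast)
    have hlv : L.dropLast.length = m := by
      rw [List.length_dropLast, hL.2]; rfl
    have hvne : L.dropLast ≠ [] := by
      intro h; rw [h] at hlv; simp at hlv; omega
    have hch : (L.dropLast ++ [L.getLast hne]).Chain' (fun a b => b ≠ ι a) := by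
      rw [hvw]; exact hL.1
    have hch' := List.isChain_append.mp hch
    have hhead : L.dropLast.head hvne = x := by
      have h1 : L.head? = L.dropLast.head? := by
        conv_lhs => rw [← hvw]
        rw [List.head?_append_of_ne_nil _ hvne]
      rw [List.head?_eq_head hvne] at h1
      exact Option.some.inj ((hx ▸ h1).symm)
    have hcyc : Cyc L.dropLast := by
      intro z hz hlz
      have hz' : z = x := by rw [List.head?_eq_head hvne] at hz; rw [← Option.some.inj hz, hhead]
      subst hz'
      have hjunction := hch'.2.2 (ι z) hlz (L.getLast hne) (by simp)
      rw [hlast', ι_ι] at hjunction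
      exact hjunction rfl
    refine ⟨⟨L.dropLast, ⟨hch'.1, hlv⟩, hcyc⟩, ?_⟩
    apply Subtype.ext
    show L.dropLast ++ [L.dropLast.head _] = L
    rw [hhead, ← hlast']
    exact hvw

def appendInvHead {k m : ℕ} (hm : 1 ≤ m) (v : F k m) : D k (m + 1) := by
  refine ⟨v.val ++ [ι (v.val.head (F_ne_nil hm v))], ⟨?_, by simp [v.property.1.2]⟩,
    v.val.head (F_ne_nil hm v), ?_, List.getLast?_concat⟩
  · refine List.isChain_append.mpr ⟨v.property.1.1, List.isChain_singleton _, ?_⟩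
    intro a ha b hb
    simp only [List.head?_cons, Option.mem_def, Option.some.injEq] at hb
    subst hb
    obtain ⟨x, y, hx, hy, hne⟩ := v.property.2
    have hx' : v.val.head (F_ne_nil hm v) = x :=
      Option.some.inj ((List.head?_eq_head _).symm.trans hx)
    have ha' : a = y := by
      have : v.val.getLast? = some a := ha
      exact Option.some.inj (this.symm.trans hy)
    subst ha'
    rw [hx']
    intro hcontra
    apply hne
    have := congrArg ι hcontra
    rwa [ι_ι, ι_ι, eq_comm] at this
  · rw [List.head?_append_of_ne_nil _ (F_ne_nil hm v), List.head?_eq_head]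

lemma card_D_succ (k m : ℕ) (hm : 1 ≤ m) :
    Nat.card (D k (m + 1)) = Nat.card (F k m) := by
  refine Nat.card_congr (Equiv.ofBijective (appendInvHead (k := k) hm) ⟨?_, ?_⟩).symm
  · intro v v' h
    have h2 := congrArg Subtype.val h
    simp only [appendInvHead] at h2
    exact Subtype.ext (List.append_inj_left' h2 rfl)
  · rintro ⟨L, hL, x, hx, hlast⟩
    have hne : L ≠ [] := by rintro rfl; simp at hx
    have hvw : L.dropLast ++ [L.getLast hne] = L := List.dropLast_append_getLast hne
    have hx' : L.head hne = x := Option.some.inj ((List.head?_eq_head hne).symm.trans hx)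
    have hlast' : L.getLast hne = ι x :=
      Option.some.inj ((List.getLast?_eq_getLast hne).symm.trans hlast)
    have hlv : L.dropLast.length = m := by
      rw [List.length_dropLast, hL.2]; rfl
    have hvne : L.dropLast ≠ [] := by
      intro h; rw [h] at hlv; simp at hlv; omega
    have hch : (L.dropLast ++ [L.getLast hne]).Chain' (fun a b => b ≠ ι a) := by
      rw [hvw]; exact hL.1
    have hch' := List.isChain_append.mp hch
    have hhead : L.dropLast.head hvne = x := by
      have h1 : L.head? = L.dropLast.head? := by
        conv_lhs => rw [← hvw]
        rw [List.head?_append_of_ne_nil _ hvne]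
      rw [List.head?_eq_head hvne] at h1
      exact Option.some.inj ((hx ▸ h1).symm)
    have hF : ∃ a b, L.dropLast.head? = some a ∧ L.dropLast.getLast? = some b ∧ b ≠ a := by
      refine ⟨x, L.dropLast.getLast hvne, by rw [List.head?_eq_head hvne, hhead],
        List.getLast?_eq_getLast hvne, ?_⟩
      intro hcontra
      have hjunction := hch'.2.2 (L.dropLast.getLast hvne)
        (List.getLast?_eq_getLast hvne) (L.getLast hne) (by simp)
      rw [hlast', hcontra] at hjunction
      exact hjunction rfl
    refine ⟨⟨L.dropLast, ⟨hch'.1, hlv⟩, hF⟩, ?_⟩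
    apply Subtype.ext
    show L.dropLast ++ [ι (L.dropLast.head _)] = L
    rw [hhead, ← hlast']
    exact hvw

lemma D_one_empty (k : ℕ) : IsEmpty (D k 1) := by
  constructor
  rintro ⟨L, ⟨_, hlen⟩, x, hx, hlast⟩
  cases L with
  | nil => simp at hlen
  | cons a t =>
    cases t with
    | nil =>
      simp only [List.head?_cons, Option.some.injEq] at hx
      subst hx
      simp only [List.getLast?_singleton, Option.some.injEq] at hlast
      exact ne_ι_self _ hlast
    | cons b t2 => simp at hlen

lemma D_two_empty (k : ℕ) : IsEmpty (D k 2) := by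
  constructor
  rintro ⟨L, ⟨hred, hlen⟩, x, hx, hlast⟩
  cases L with
  | nil => simp at hlen
  | cons a t =>
    cases t with
    | nil => simp at hlen
    | cons b t2 =>
      cases t2 with
      | nil =>
        simp only [List.head?_cons, Option.some.injEq] at hx
        subst hx
        have hb : b = ι a := by
          have h0 : (a :: b :: ([] : List (W k))).getLast? = some b := rfl
          exact Option.some.inj (h0.symm.trans hlast)
        exact (List.isChain_cons_cons.mp hred).1 hb
      | cons c t3 => simp at hlen

lemma card_C_one (k : ℕ) : Nat.card (C k 1) = 2 * k := by
  have h := card_split_CD k 1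
  rw [@Nat.card_of_isEmpty _ (D_one_empty k)] at h
  rw [card_A_one k] at h
  omega

lemma card_C_two (k : ℕ) : Nat.card (C k 2) = Nat.card (A k 2) := by
  have h := card_split_CD k 2
  rw [@Nat.card_of_isEmpty _ (D_two_empty k)] at h
  omega

lemma card_A_formula (k : ℕ) : ∀ n, Nat.card (A k (n + 1)) = 2 * k * (2 * k - 1) ^ n := by
  intro n
  induction n with
  | zero => simpa using card_A_one k
  | succ n ih =>
    rw [card_A_succ k (n + 1) (by omega), ih, pow_succ]
    ring

lemma cast_card_A (k : ℕ) (hk : 2 ≤ k) (n : ℕ) :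
    (Nat.card (A k (n + 1)) : ℤ) = 2 * (k : ℤ) * (2 * (k : ℤ) - 1) ^ n := by
  rw [card_A_formula k n]
  have h1 : 1 ≤ 2 * k := by omega
  push_cast [Nat.cast_sub h1]
  ring

lemma c_recursion (k n : ℕ) (hn : 1 ≤ n) :
    (Nat.card (C k (n + 2)) : ℤ) =
      (Nat.card (A k (n + 2)) : ℤ) - (Nat.card (A k (n + 1)) : ℤ)
        + (Nat.card (C k n) : ℤ) := by
  have h1 := card_split_CD k (n + 2)
  have h2 := card_D_succ k (n + 1) (by omega)
  have h3 := card_split_EF k (n + 1) (by omega)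
  have h4 := card_E_succ k n hn
  have h1' : (Nat.card (A k (n+2)) : ℤ) = Nat.card (C k (n+2)) + Nat.card (D k (n+2)) := by
    exact_mod_cast h1
  have h2' : (Nat.card (D k (n+2)) : ℤ) = Nat.card (F k (n+1)) := by exact_mod_cast h2
  have h3' : (Nat.card (A k (n+1)) : ℤ) = Nat.card (E k (n+1)) + Nat.card (F k (n+1)) := by
    exact_mod_cast h3
  have h4' : (Nat.card (E k (n+1)) : ℤ) = Nat.card (C k n) := by exact_mod_cast h4
  linarith

lemma pow_step (k : ℕ) (n : ℕ) :
    2 * (k:ℤ) * (2*(k:ℤ)-1) ^ (n+2) - 2 * (k:ℤ) * (2*(k:ℤ)-1) ^ (n+1)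
      + (2*(k:ℤ)-1) ^ (n+1) = (2*(k:ℤ)-1) ^ (n+3) := by
  rw [show n + 3 = (n + 1) + 2 from rfl, show n + 2 = (n + 1) + 1 from rfl,
    pow_add, pow_succ]
  ring

lemma card_C_formula (k : ℕ) (hk : 2 ≤ k) : ∀ n : ℕ,
    (Nat.card (C k (n + 1)) : ℤ) =
      (2*(k:ℤ)-1) ^ (n+1) + (k:ℤ) + ((k:ℤ) - 1) * (-1) ^ (n+1) := by
  have base0 : (Nat.card (C k 1) : ℤ) = (2*(k:ℤ)-1) ^ 1 + (k:ℤ) + ((k:ℤ)-1) * (-1)^1 := by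
    rw [card_C_one k]; push_cast; ring
  have base1 : (Nat.card (C k 2) : ℤ) = (2*(k:ℤ)-1) ^ 2 + (k:ℤ) + ((k:ℤ)-1) * (-1)^2 := by
    have : (Nat.card (C k 2) : ℤ) = (Nat.card (A k 2) : ℤ) := by
      exact_mod_cast card_C_two k
    rw [this, cast_card_A k hk 1]; ring
  have key : ∀ n : ℕ,
      (Nat.card (C k (n + 1)) : ℤ) =
        (2*(k:ℤ)-1) ^ (n+1) + (k:ℤ) + ((k:ℤ) - 1) * (-1) ^ (n+1) ∧
      (Nat.card (C k (n + 2)) : ℤ) =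
        (2*(k:ℤ)-1) ^ (n+2) + (k:ℤ) + ((k:ℤ) - 1) * (-1) ^ (n+2) := by
    intro n
    induction n with
    | zero => exact ⟨base0, base1⟩
    | succ n ih =>
      refine ⟨ih.2, ?_⟩
      have hrec := c_recursion k (n + 1) (by omega)
      rw [cast_card_A k hk (n + 2), cast_card_A k hk (n + 1), ih.1] at hrec
      have hstep := pow_step k n
      have hsign : (-1 : ℤ) ^ (n + 3) = (-1) ^ (n + 1) := by
        rw [pow_succ, pow_succ]; ring
      rw [show n + 1 + 2 = n + 3 from rfl] at hrec
      rw [show n + 1 + 2 = n + 3 from rfl, hrec, hsign]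
      linarith [hstep]
  exact fun n => (key n).1

def toGrp {k m : ℕ} (L : C k m) :
    {γ : FreeGroup (Fin k) // IsCyclicallyReduced γ ∧ γ.toWord.length = m} := by
  refine ⟨FreeGroup.mk L.val, ?_, ?_⟩ <;>
    (have htw : (FreeGroup.mk L.val).toWord = L.val := by
      rw [FreeGroup.toWord_mk]; exact (reduce_eq_self_iff L.val).mpr L.property.1.1)
  · intro x hx
    rw [htw] at hx ⊢
    exact L.property.2 x hx
  · rw [htw]; exact L.property.1.2

lemma card_bridge (k m : ℕ) :
    Nat.card {γ : FreeGroup (Fin k) // IsCyclicallyReduced γ ∧ γ.toWord.length = m}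
      = Nat.card (C k m) := by
  refine (Nat.card_congr (Equiv.ofBijective (toGrp (k := k) (m := m)) ⟨?_, ?_⟩)).symm
  · intro L L' h
    have h2 : FreeGroup.mk L.val = FreeGroup.mk L'.val := congrArg Subtype.val h
    have h3 := congrArg FreeGroup.toWord h2
    rw [FreeGroup.toWord_mk, FreeGroup.toWord_mk,
      (reduce_eq_self_iff L.val).mpr L.property.1.1,
      (reduce_eq_self_iff L'.val).mpr L'.property.1.1] at h3
    exact Subtype.ext h3
  · rintro ⟨γ, hcyc, hlen⟩
    have hred : Red γ.toWord := (reduce_eq_self_iff _).mp (FreeGroup.reduce_toWord γ)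
    refine ⟨⟨γ.toWord, ⟨hred, hlen⟩, fun x hx => hcyc x hx⟩, ?_⟩
    apply Subtype.ext
    exact FreeGroup.mk_toWord

end CycRedAux

theorem stmt_8 (k m : ℕ) (hk : 2 ≤ k) (hm : 1 ≤ m) :
    (Nat.card {γ : FreeGroup (Fin k) // IsCyclicallyReduced γ ∧ γ.toWord.length = m} : ℤ)
      = (2 * (k : ℤ) - 1) ^ m + 1 + ((k : ℤ) - 1) * (1 + (-1) ^ m) := by
  obtain ⟨n, rfl⟩ : ∃ n, m = n + 1 := ⟨m - 1, by omega⟩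
  rw [CycRedAux.card_bridge k (n + 1)]
  rw [CycRedAux.card_C_formula k hk n]
  ring
end
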